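/- arXiv:2505.00874 — 3 statements merged into one kernel-verified Lean document; each statement's English description precedes it below -/
import Mathlib

section
/- Let G be a finite planar graph with vertex set V, edge set E, and face set F satisfying Euler's formula |V| - |E| + |F| = 2. Suppose every vertex has degree at least 3, every face has at least 3 edges, the sum of vertex degrees equals 2|E|, and the sum of face sizes equals 2|E|. If G has at most two vertices of degree exactly 3 and at most two faces of size exactly 3, then a contradiction follows. In other words, G must contain at least three vertices of degree 3 or at least three triangular faces. -/
/-!
Give every vertex the charge `4 - deg v` and every face the charge `4 - gon σ`. Since the degrees
and the face sizes both sum to `2|E|`, Euler's formula makes the total charge `4 (|V| - |E| + |F|) = 8`.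
As degrees and face sizes are at least `3`, only vertices of degree `3` and triangles carry
positive charge, and exactly `1` each; so together there are at least eight of them.
-/

open Finset

theorem sum_succ_sub_le_card_filter_eq {ι : Type*} (s : Finset ι) (f : ι → ℕ) (n : ℕ)
    (hf : ∀ i ∈ s, n ≤ f i) :
    ∑ i ∈ s, ((n : ℤ) + 1 - f i) ≤ #(s.filter fun i => f i = n) := by
  rw [card_filter, Nat.cast_sum]
  refine sum_le_sum fun i hi => ?_
  by_cases hi' : f i = n
  · simp [hi']
  · have : n + 1 ≤ f i := lt_of_le_of_ne (hf i hi) (Ne.symm hi')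
    simp only [hi', if_false, Nat.cast_zero]
    omega

theorem sum_four_sub_deg_add_sum_four_sub_gon {V E F : Type*} [Fintype V] [Fintype E]
    [Fintype F] (deg : V → ℕ) (gon : F → ℕ)
    (hdeg : ∑ v, deg v = 2 * Fintype.card E)
    (hgon : ∑ σ, gon σ = 2 * Fintype.card E)
    (heuler : (Fintype.card V : ℤ) - Fintype.card E + Fintype.card F = 2) :
    ∑ v, (4 - (deg v : ℤ)) + ∑ σ, (4 - (gon σ : ℤ)) = 8 := by
  have hdeg' : ∑ v, (deg v : ℤ) = 2 * Fintype.card E := by exact_mod_cast hdeg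
  have hgon' : ∑ σ, (gon σ : ℤ) = 2 * Fintype.card E := by exact_mod_cast hgon
  simp only [sum_sub_distrib, sum_const, card_univ, nsmul_eq_mul, hdeg', hgon']
  linarith

theorem stmt_0_general {V E F : Type*} [Fintype V] [Fintype E] [Fintype F]
    (deg : V → ℕ) (gon : F → ℕ)
    (hdeg : ∑ v, deg v = 2 * Fintype.card E)
    (hgon : ∑ σ, gon σ = 2 * Fintype.card E)
    (hdeg3 : ∀ v, 3 ≤ deg v)
    (hgon3 : ∀ σ, 3 ≤ gon σ)
    (heuler : (Fintype.card V : ℤ) - Fintype.card E + Fintype.card F = 2) :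
    3 ≤ (Finset.univ.filter fun v => deg v = 3).card ∨
      3 ≤ (Finset.univ.filter fun σ => gon σ = 3).card := by
  have hcharge := sum_four_sub_deg_add_sum_four_sub_gon deg gon hdeg hgon heuler
  have hV : ∑ v, (4 - (deg v : ℤ)) ≤ #(univ.filter fun v => deg v = 3) :=
    sum_succ_sub_le_card_filter_eq univ deg 3 fun v _ => hdeg3 v
  have hF : ∑ σ, (4 - (gon σ : ℤ)) ≤ #(univ.filter fun σ => gon σ = 3) :=
    sum_succ_sub_le_card_filter_eq univ gon 3 fun σ _ => hgon3 σ
  omega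

theorem stmt_0 {V E F : Type*} [Fintype V] [Fintype E] [Fintype F]
    [DecidableEq V] [DecidableEq F]
    (deg : V → ℕ) (gon : F → ℕ)
    (hdeg : ∑ v, deg v = 2 * Fintype.card E)
    (hgon : ∑ σ, gon σ = 2 * Fintype.card E)
    (hdeg3 : ∀ v, 3 ≤ deg v)
    (hgon3 : ∀ σ, 3 ≤ gon σ)
    (heuler : (Fintype.card V : ℤ) - Fintype.card E + Fintype.card F = 2) :
    3 ≤ (Finset.univ.filter fun v => deg v = 3).card ∨
      3 ≤ (Finset.univ.filter fun σ => gon σ = 3).card :=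
  stmt_0_general deg gon hdeg hgon hdeg3 hgon3 heuler
end

section
/- Let G be a finite planar graph with Euler relation |V| - |E| + |F| = 2, where every vertex has degree at least 3 and every face has size at least 3 (with ∑ deg = 2|E| and ∑ gon = 2|E|). Let e be a fixed edge of G. Then G contains a triangular face not incident to e, or G contains a vertex of degree 3 not incident to e, given that at most two triangular faces are incident to any edge and at most two degree-3 vertices are incident to any edge. -/
/-
Each vertex and each face has weight at least 4 once the ones of weight exactly 3 get an extra
unit, so 4|F| ≤ 2|E| + t and 4|V| ≤ 2|E| + d, where t and d count the triangles and the degree-3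
vertices. If all of them were incident to e, then t, d ≤ 2, whence |V| + |F| ≤ |E| + 1,
contradicting Euler's relation.
-/

open Finset

lemma four_mul_card_le_sum_add_card_filter_eq_three {α : Type*} [Fintype α] (f : α → ℕ)
    (hf : ∀ a, 3 ≤ f a) :
    4 * Fintype.card α ≤ ∑ a, f a + #{a | f a = 3} := by
  have hpointwise (a : α) : 4 ≤ f a + if f a = 3 then 1 else 0 := by
    have := hf a
    split_ifs <;> omega
  calc 4 * Fintype.card α = ∑ _a : α, 4 := by simp [mul_comm]
    _ ≤ ∑ a, (f a + if f a = 3 then 1 else 0) := sum_le_sum fun a _ => hpointwise a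
    _ = ∑ a, f a + #{a | f a = 3} := by rw [sum_add_distrib, card_filter]

lemma two_mul_card_le_of_card_filter_eq_three_le_two {α : Type*} [Fintype α] (f : α → ℕ)
    (m : ℕ) (hsum : ∑ a, f a = 2 * m) (hf : ∀ a, 3 ≤ f a) (hthree : #{a | f a = 3} ≤ 2) :
    2 * Fintype.card α ≤ m + 1 := by
  have := four_mul_card_le_sum_add_card_filter_eq_three f hf
  omega

lemma card_filter_le_of_imp {α : Type*} [Fintype α] {p q : α → Prop} [DecidablePred p]
    [DecidablePred q] (h : ∀ a, p a → q a) : #{a | p a} ≤ #{a | q a} :=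
  card_le_card (monotone_filter_right _ fun a _ => h a)

theorem stmt_1_general {V E F : Type*} [Fintype V] [Fintype E] [Fintype F]
    (deg : V → ℕ) (gon : F → ℕ)
    (incF : E → F → Prop) (incV : E → V → Prop)
    [∀ e σ, Decidable (incF e σ)] [∀ e v, Decidable (incV e v)]
    (hdeg : ∑ v, deg v = 2 * Fintype.card E)
    (hgon : ∑ σ, gon σ = 2 * Fintype.card E)
    (hdeg3 : ∀ v, 3 ≤ deg v)
    (hgon3 : ∀ σ, 3 ≤ gon σ)
    (heuler : (Fintype.card V : ℤ) - Fintype.card E + Fintype.card F = 2)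
    (hEF : ∀ e : E, (Finset.univ.filter fun σ => incF e σ).card = 2)
    (hEV : ∀ e : E, (Finset.univ.filter fun v => incV e v).card = 2)
    (e : E) :
    (∃ σ : F, gon σ = 3 ∧ ¬ incF e σ) ∨ (∃ v : V, deg v = 3 ∧ ¬ incV e v) := by
  by_contra! ⟨hF, hV⟩
  have hF_card := two_mul_card_le_of_card_filter_eq_three_le_two gon _ hgon hgon3
    ((card_filter_le_of_imp hF).trans (hEF e).le)
  have hV_card := two_mul_card_le_of_card_filter_eq_three_le_two deg _ hdeg hdeg3
    ((card_filter_le_of_imp hV).trans (hEV e).le)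
  omega

theorem stmt_1 {V E F : Type*} [Fintype V] [Fintype E] [Fintype F]
    [DecidableEq V] [DecidableEq F]
    (deg : V → ℕ) (gon : F → ℕ)
    (incF : E → F → Prop) (incV : E → V → Prop)
    [∀ e σ, Decidable (incF e σ)] [∀ e v, Decidable (incV e v)]
    (hdeg : ∑ v, deg v = 2 * Fintype.card E)
    (hgon : ∑ σ, gon σ = 2 * Fintype.card E)
    (hdeg3 : ∀ v, 3 ≤ deg v)
    (hgon3 : ∀ σ, 3 ≤ gon σ)
    (heuler : (Fintype.card V : ℤ) - Fintype.card E + Fintype.card F = 2)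
    (hEF : ∀ e : E, (Finset.univ.filter fun σ => incF e σ).card = 2)
    (hEV : ∀ e : E, (Finset.univ.filter fun v => incV e v).card = 2)
    (e : E) :
    (∃ σ : F, gon σ = 3 ∧ ¬ incF e σ) ∨ (∃ v : V, deg v = 3 ∧ ¬ incV e v) :=
  stmt_1_general deg gon incF incV hdeg hgon hdeg3 hgon3 heuler hEF hEV e
end

section
/- Let (G, v, ω) be a sequence-limit of self-stressed frameworks under contraction: given finite graphs G and a quotient graph G̃ = G/∼ obtained by contracting equivalence classes of vertices, a sequence of placements vⁿ : V(G) → ℝ² converging to v* with v*ᵢ = ṽ_I whenever i ∈ I, and stresses ωⁿ : E(G) → ℝ satisfying the equilibrium condition ∑_{j : ij ∈ E} ωⁿ_{ij}(vⁿ_j − vⁿ_i) = 0 at every vertex, with ωⁿ_{ij} → ω*_{ij} whenever i and j are in different classes. Define ω̃_{IJ} := ∑_{i ∈ I, j ∈ J} ω*_{ij} for classes I ≠ J adjacent in G̃. Then ω̃ is a self-stress on (G̃, ṽ): for each class I, ∑_{J ≠ I} ω̃_{IJ}(ṽ_J − ṽ_I) = 0. -/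
/-!
For a symmetric stress the forces `ω i j • (x j - x i)` are antisymmetric, so the forces that a
set `s` of vertices exerts on itself cancel; summing the equilibrium equations over `s` leaves
the net force across the boundary of `s`, which is therefore zero. Taking `s` to be a class `I`,
the boundary sum only involves stresses between different classes, so it passes to the limit;
grouping its terms by the class `J` of the outer endpoint gives `∑ J, ω̃ I J • (ṽ J - ṽ I)`.
-/

open Filter Topology Finset

section Stress

variable {V R E : Type*} [Semiring R] [AddCommGroup E] [Module R E]

theorem sum_sum_smul_sub_eq_zero_of_symm {ω : V → V → R} (hsymm : ∀ i j, ω i j = ω j i)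
    (x : V → E) (s : Finset V) : ∑ i ∈ s, ∑ j ∈ s, ω i j • (x j - x i) = 0 := by
  have hswap : ∑ i ∈ s, ∑ j ∈ s, ω i j • x j = ∑ i ∈ s, ∑ j ∈ s, ω i j • x i := by
    rw [sum_comm]
    simp_rw [hsymm]
  simp only [smul_sub, sum_sub_distrib, hswap, sub_self]

variable [Fintype V] [DecidableEq V]

theorem sum_sum_compl_smul_sub_eq_zero {ω : V → V → R} (hsymm : ∀ i j, ω i j = ω j i)
    {x : V → E} (hequil : ∀ i, ∑ j, ω i j • (x j - x i) = 0) (s : Finset V) :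
    ∑ i ∈ s, ∑ j ∈ sᶜ, ω i j • (x j - x i) = 0 := by
  have hnet : ∑ i ∈ s, ∑ j, ω i j • (x j - x i) = 0 := sum_eq_zero fun i _ => hequil i
  simpa only [← sum_add_sum_compl s, sum_add_distrib,
    sum_sum_smul_sub_eq_zero_of_symm hsymm, zero_add] using hnet

variable [TopologicalSpace R] [TopologicalSpace E] [IsTopologicalAddGroup E]
  [ContinuousSMul R E] [T2Space E]

theorem sum_sum_compl_smul_sub_eq_zero_of_tendsto {ι : Type*} {l : Filter ι} [l.NeBot]
    {ω : ι → V → V → R} {x : ι → V → E} {ωlim : V → V → R} {xlim : V → E}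
    (hsymm : ∀ n i j, ω n i j = ω n j i)
    (hequil : ∀ n i, ∑ j, ω n i j • (x n j - x n i) = 0) (s : Finset V)
    (hx : ∀ i, Tendsto (fun n => x n i) l (𝓝 (xlim i)))
    (hω : ∀ i ∈ s, ∀ j ∉ s, Tendsto (fun n => ω n i j) l (𝓝 (ωlim i j))) :
    ∑ i ∈ s, ∑ j ∈ sᶜ, ωlim i j • (xlim j - xlim i) = 0 := by
  refine tendsto_nhds_unique (l := l)
    (f := fun n => ∑ i ∈ s, ∑ j ∈ sᶜ, ω n i j • (x n j - x n i))
    (tendsto_finsetSum _ fun i hi => tendsto_finsetSum _ fun j hj => ?_) ?_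
  · exact (hω i hi j (mem_compl.mp hj)).smul ((hx j).sub (hx i))
  · simp only [sum_sum_compl_smul_sub_eq_zero (hsymm _) (hequil _), tendsto_const_nhds]

end Stress

section Contraction

variable {V W R : Type*} [Fintype V] [DecidableEq W]

def contractStress [AddCommMonoid R] (c : V → W) (ω : V → V → R) (I J : W) : R :=
  ∑ i, ∑ j, if c i = I ∧ c j = J ∧ I ≠ J then ω i j else 0

theorem sum_contractStress_smul_sub_eq {E : Type*} [DecidableEq V] [Fintype W] [Semiring R]
    [AddCommGroup E] [Module R E] (c : V → W) (ω : V → V → R) (y : W → E) (I : W) :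
    ∑ J, contractStress c ω I J • (y J - y I) =
      ∑ i ∈ ({i | c i = I} : Finset V), ∑ j ∈ ({i | c i = I} : Finset V)ᶜ,
        ω i j • (y (c j) - y (c i)) := by
  simp only [contractStress, sum_smul, ite_smul, zero_smul, sum_filter, compl_filter]
  rw [sum_comm]
  refine sum_congr rfl fun i _ => ?_
  rw [sum_comm]
  split_ifs with hi
  · subst hi
    refine sum_congr rfl fun j _ => ?_
    simp [ite_and, eq_comm]
  · simp [hi]

end Contraction

theorem stmt_4 {V W : Type*} [Fintype V] [Fintype W] [DecidableEq W]
    (c : V → W)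
    (ω : ℕ → V → V → ℝ) (ωstar : V → V → ℝ)
    (vn : ℕ → V → EuclideanSpace ℝ (Fin 2)) (vt : W → EuclideanSpace ℝ (Fin 2))
    (hsymm : ∀ n i j, ω n i j = ω n j i)
    (hequil : ∀ n i, ∑ j, ω n i j • (vn n j - vn n i) = 0)
    (hv : ∀ i, Tendsto (fun n => vn n i) atTop (nhds (vt (c i))))
    (hω : ∀ i j, c i ≠ c j → Tendsto (fun n => ω n i j) atTop (nhds (ωstar i j))) :
    ∀ I : W,
      ∑ J, (∑ i, ∑ j, if c i = I ∧ c j = J ∧ I ≠ J then ωstar i j else 0) •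
        (vt J - vt I) = 0 := by
  classical
  intro I
  have hcross := sum_sum_compl_smul_sub_eq_zero_of_tendsto hsymm hequil {i | c i = I} hv
    fun i hi j hj => hω i j fun hij => hj (by simpa [← hij] using hi)
  exact (sum_contractStress_smul_sub_eq c ωstar vt I).trans hcross
end
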